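/- For a multivariate Gaussian with mean μ and positive-definite covariance Σ, the gradient with respect to μ of the expected fitness J(μ) = E_{x~N(μ,Σ)}[f(x)] equals E_{x~N(μ,Σ)}[f(x) Σ⁻¹(x − μ)], provided f is bounded and measurable (so that differentiation under the integral sign is valid). -/

import Mathlib

/-!
Positive definiteness of `S⁻¹` gives `c‖y‖² ≤ y ⬝ᵥ S⁻¹ *ᵥ y` for some `c > 0`, so the density
centred at any `m` with `‖m - μ‖ ≤ 1`, and its `m`-derivative `gaussPdf m S x • S⁻¹ (x - m)`, are
dominated by the single integrable envelope `(‖x - μ‖ + 1) exp (-(c / 4) ‖x - μ‖²)`. As `f` is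
bounded, differentiation under the integral sign applies, and the integral of the derivative
is pulled through the dot product.
-/

open MeasureTheory Matrix Real Filter

noncomputable def gaussPdf {n : ℕ} (μ : Fin n → ℝ) (S : Matrix (Fin n) (Fin n) ℝ)
    (x : Fin n → ℝ) : ℝ :=
  (2 * Real.pi) ^ (-(n : ℝ) / 2) * S.det ^ (-(1 : ℝ) / 2) *
    Real.exp (-((x - μ) ⬝ᵥ (S⁻¹ *ᵥ (x - μ))) / 2)

section GaussianIntegrability
variable {E : Type*} [NormedAddCommGroup E] [NormedSpace ℝ E] [FiniteDimensional ℝ E]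
  [MeasurableSpace E] [BorelSpace E] (μ : Measure E) [μ.IsAddHaarMeasure]

theorem integrable_pow_norm_mul_exp_neg_mul_sq_norm {a : ℝ} (ha : 0 < a) (k : ℕ) :
    Integrable (fun y : E => ‖y‖ ^ k * exp (-a * ‖y‖ ^ 2)) μ := by
  rcases subsingleton_or_nontrivial E with hE | hE
  · exact (by fun_prop : Continuous _).integrable_of_hasCompactSupport
      (HasCompactSupport.of_compactSpace _)
  · rw [integrable_fun_norm_addHaar μ (f := fun t => t ^ k * exp (-a * t ^ 2))]
    refine (integrableOn_rpow_mul_exp_neg_mul_sq ha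
      (s := ((Module.finrank ℝ E - 1 + k : ℕ) : ℝ)) (neg_one_lt_zero.trans_le (Nat.cast_nonneg _))
      ).congr_fun (fun t _ => ?_) measurableSet_Ioi
    simp only [rpow_natCast, pow_add, smul_eq_mul]
    ring

end GaussianIntegrability

theorem Matrix.PosDef.exists_pos_mul_sq_norm_le {ι : Type*} [Fintype ι] {A : Matrix ι ι ℝ}
    (hA : A.PosDef) : ∃ c > 0, ∀ y : ι → ℝ, c * ‖y‖ ^ 2 ≤ y ⬝ᵥ A *ᵥ y := by
  obtain ⟨c, hc, hmin⟩ := (isCompact_sphere (0 : ι → ℝ) 1).exists_forall_le'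
    (by fun_prop : Continuous fun y : ι → ℝ => y ⬝ᵥ A *ᵥ y).continuousOn (a := 0)
    fun u hu => by simpa using hA.re_dotProduct_pos (ne_zero_of_mem_unit_sphere ⟨u, hu⟩)
  refine ⟨c, hc, fun y => ?_⟩
  rcases eq_or_ne y 0 with rfl | hy
  · simp
  have hy' : 0 < ‖y‖ := norm_pos_iff.2 hy
  have hu := hmin (‖y‖⁻¹ • y) (by simp [norm_smul, hy'.ne'])
  simp only [mulVec_smul, smul_dotProduct, dotProduct_smul, smul_eq_mul] at hu
  calc c * ‖y‖ ^ 2 ≤ ‖y‖⁻¹ * (‖y‖⁻¹ * (y ⬝ᵥ A *ᵥ y)) * ‖y‖ ^ 2 := by gcongr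
    _ = y ⬝ᵥ A *ᵥ y := by field_simp

noncomputable def dotProductCLM {ι : Type*} [Fintype ι] : (ι → ℝ) →L[ℝ] (ι → ℝ) →L[ℝ] ℝ :=
  LinearMap.toContinuousLinearMap
    ((LinearMap.toContinuousLinearMap : _ ≃ₗ[ℝ] _).toLinearMap ∘ₗ dotProductBilin ℝ ℝ)

@[simp]
theorem dotProductCLM_apply {ι : Type*} [Fintype ι] (v w : ι → ℝ) : dotProductCLM v w = v ⬝ᵥ w :=
  rfl

theorem hasFDerivAt_dotProduct_mulVec_self {ι : Type*} [Fintype ι] {A : Matrix ι ι ℝ}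
    (hA : A.IsSymm) (y : ι → ℝ) :
    HasFDerivAt (fun y => y ⬝ᵥ A *ᵥ y) ((2 : ℝ) • dotProductCLM (A *ᵥ y)) y := by
  refine (dotProductCLM.hasFDerivAt_of_bilinear (hasFDerivAt_id y)
    (LinearMap.toContinuousLinearMap (mulVecLin A)).hasFDerivAt).congr_fderiv ?_
  ext w
  simp [dotProduct_mulVec, ← mulVec_transpose, hA.eq, dotProduct_comm w]
  ring

theorem mul_exp_neg_mul_sq_le_of_abs_sub_le_one {a s t : ℝ} (ha : 0 ≤ a) (hs : 0 ≤ s)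
    (hst : |s - t| ≤ 1) : s * exp (-a * s ^ 2) ≤ exp a * ((t + 1) * exp (-(a / 2) * t ^ 2)) := by
  have hs_le : s ≤ t + 1 := by linarith [le_abs_self (s - t)]
  have ht_le : t ^ 2 ≤ 2 * s ^ 2 + 2 := by
    nlinarith [neg_abs_le (s - t), abs_nonneg (s - t), sq_nonneg (s - 1)]
  calc s * exp (-a * s ^ 2) ≤ (t + 1) * exp (a + -(a / 2) * t ^ 2) :=
        mul_le_mul hs_le (exp_le_exp.2 (by nlinarith [mul_le_mul_of_nonneg_left ht_le ha]))
          (exp_pos _).le (by linarith)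
    _ = exp a * ((t + 1) * exp (-(a / 2) * t ^ 2)) := by rw [exp_add]; ring

section GaussPdf

variable {n : ℕ} {S : Matrix (Fin n) (Fin n) ℝ}

theorem continuous_gaussPdf (μ : Fin n → ℝ) (S : Matrix (Fin n) (Fin n) ℝ) :
    Continuous (gaussPdf μ S) := by
  unfold gaussPdf
  fun_prop

theorem gaussPdf_pos (hS : S.PosDef) (μ x : Fin n → ℝ) : 0 < gaussPdf μ S x := by
  unfold gaussPdf
  have := rpow_pos_of_pos hS.det_pos (-(1 : ℝ) / 2)
  positivity

theorem exists_gaussPdf_le_mul_exp_neg_mul_sq_norm (hS : S.PosDef) :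
    ∃ c > 0, ∀ μ x : Fin n → ℝ, gaussPdf μ S x ≤ gaussPdf 0 S 0 * exp (-c * ‖x - μ‖ ^ 2) := by
  obtain ⟨c, hc, hcS⟩ := hS.inv.exists_pos_mul_sq_norm_le
  refine ⟨c / 2, by positivity, fun μ x => ?_⟩
  have hC := gaussPdf_pos hS 0 0
  simp only [gaussPdf, sub_zero, zero_dotProduct, neg_zero, zero_div, exp_zero, mul_one] at hC ⊢
  gcongr
  linarith [hcS (x - μ)]

theorem hasFDerivAt_gaussPdf (hS : S.IsSymm) (m x : Fin n → ℝ) :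
    HasFDerivAt (gaussPdf · S x) (gaussPdf m S x • dotProductCLM (S⁻¹ *ᵥ (x - m))) m := by
  have hq := (hasFDerivAt_dotProduct_mulVec_self hS.inv (x - m)).comp m
    ((hasFDerivAt_id m).const_sub x)
  have hfun : (gaussPdf · S x) = fun m => (2 * π) ^ (-(n : ℝ) / 2) * S.det ^ (-(1 : ℝ) / 2) *
      exp (-1 / 2 * ((x - m) ⬝ᵥ S⁻¹ *ᵥ (x - m))) := by
    ext m'
    simp only [gaussPdf]
    ring_nf
  rw [hfun]
  refine ((HasFDerivAt.const_mul hq (-1 / 2)).exp.const_mul _).congr_fderiv ?_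
  ext w
  simp [gaussPdf]
  ring_nf

theorem integrable_gaussPdf (hS : S.PosDef) (μ : Fin n → ℝ) : Integrable (gaussPdf μ S) := by
  obtain ⟨c, hc, hpdf⟩ := exists_gaussPdf_le_mul_exp_neg_mul_sq_norm hS
  have hg : Integrable fun x => gaussPdf 0 S 0 * (‖x - μ‖ ^ 0 * exp (-c * ‖x - μ‖ ^ 2)) :=
    ((integrable_pow_norm_mul_exp_neg_mul_sq_norm volume hc 0).comp_sub_right μ).const_mul _
  refine hg.mono' (continuous_gaussPdf μ S).aestronglyMeasurable (.of_forall fun x => ?_)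
  simpa [abs_of_pos (gaussPdf_pos hS μ x)] using hpdf μ x

theorem exists_integrable_gaussPdf_mul_norm_sub_le (hS : S.PosDef) (μ : Fin n → ℝ) :
    ∃ g : (Fin n → ℝ) → ℝ, Integrable g ∧
      ∀ m ∈ Metric.closedBall μ 1, ∀ x, gaussPdf m S x * ‖x - m‖ ≤ g x := by
  obtain ⟨c, hc, hpdf⟩ := exists_gaussPdf_le_mul_exp_neg_mul_sq_norm hS
  have hg := ((integrable_pow_norm_mul_exp_neg_mul_sq_norm volume (half_pos hc) 1).add
    (integrable_pow_norm_mul_exp_neg_mul_sq_norm volume (half_pos hc) 0)).comp_sub_right μ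
  refine ⟨_, hg.const_mul (gaussPdf 0 S 0 * exp c), fun m hm x => ?_⟩
  have hdist : |‖x - m‖ - ‖x - μ‖| ≤ 1 := by
    refine (abs_norm_sub_norm_le (x - m) (x - μ)).trans ?_
    rwa [sub_sub_sub_cancel_left, ← mem_closedBall_iff_norm']
  calc gaussPdf m S x * ‖x - m‖
      ≤ gaussPdf 0 S 0 * exp (-c * ‖x - m‖ ^ 2) * ‖x - m‖ := by gcongr; exact hpdf m x
    _ = gaussPdf 0 S 0 * (‖x - m‖ * exp (-c * ‖x - m‖ ^ 2)) := by ring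
    _ ≤ gaussPdf 0 S 0 * (exp c * ((‖x - μ‖ + 1) * exp (-(c / 2) * ‖x - μ‖ ^ 2))) :=
        mul_le_mul_of_nonneg_left
          (mul_exp_neg_mul_sq_le_of_abs_sub_le_one hc.le (norm_nonneg _) hdist)
          (gaussPdf_pos hS 0 0).le
    _ = _ := by simp only [Pi.add_apply, pow_one, pow_zero]; ring

theorem hasFDerivAt_integral_mul_gaussPdf {f : (Fin n → ℝ) → ℝ} (hf : Measurable f) {B : ℝ}
    (hB : ∀ x, |f x| ≤ B) (hS : S.PosDef) (μ : Fin n → ℝ) :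
    HasFDerivAt (fun m => ∫ x, f x * gaussPdf m S x)
      (dotProductCLM (∫ x, (f x * gaussPdf μ S x) • (S⁻¹ *ᵥ (x - μ)))) μ := by
  obtain ⟨g, hg, hpdf⟩ := exists_integrable_gaussPdf_mul_norm_sub_le hS μ
  set A := LinearMap.toContinuousLinearMap (mulVecLin S⁻¹)
  have hB0 : 0 ≤ B := (abs_nonneg _).trans (hB 0)
  have hmeas : ∀ m, Measurable fun x => f x * gaussPdf m S x :=
    fun m => hf.mul (continuous_gaussPdf m S).measurable
  have hscore : ∀ m ∈ Metric.closedBall μ 1, ∀ x,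
      ‖(f x * gaussPdf m S x) • (S⁻¹ *ᵥ (x - m))‖ ≤ B * ‖A‖ * g x := fun m hm x =>
    calc ‖(f x * gaussPdf m S x) • (S⁻¹ *ᵥ (x - m))‖
        = |f x| * gaussPdf m S x * ‖A (x - m)‖ := by
          rw [norm_smul, Real.norm_eq_abs, abs_mul, abs_of_pos (gaussPdf_pos hS m x)]; rfl
      _ ≤ B * gaussPdf m S x * (‖A‖ * ‖x - m‖) := by
          have hpos := (gaussPdf_pos hS m x).le
          exact mul_le_mul (mul_le_mul_of_nonneg_right (hB x) hpos) (A.le_opNorm _)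
            (norm_nonneg _) (mul_nonneg hB0 hpos)
      _ = B * ‖A‖ * (gaussPdf m S x * ‖x - m‖) := by ring
      _ ≤ B * ‖A‖ * g x := by gcongr; exact hpdf m hm x
  have hφ : Integrable fun x => (f x * gaussPdf μ S x) • (S⁻¹ *ᵥ (x - μ)) :=
    (hg.const_mul _).mono' ((hmeas μ).smul
      (by fun_prop : Continuous fun x => S⁻¹ *ᵥ (x - μ)).measurable).aestronglyMeasurable
      (.of_forall (hscore μ (Metric.mem_closedBall_self zero_le_one)))
  have hdiff : ∀ m x, HasFDerivAt (fun m => f x * gaussPdf m S x)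
      (dotProductCLM ((f x * gaussPdf m S x) • (S⁻¹ *ᵥ (x - m)))) m := fun m x => by
    rw [map_smul, ← smul_smul]
    exact (hasFDerivAt_gaussPdf (isHermitian_iff_isSymm.mp hS.isHermitian) m x).const_mul (f x)
  have hD := hasFDerivAt_integral_of_dominated_of_fderiv_le
    (F' := fun m x => dotProductCLM ((f x * gaussPdf m S x) • (S⁻¹ *ᵥ (x - m))))
    (bound := fun x => ‖dotProductCLM (ι := Fin n)‖ * (B * ‖A‖ * g x))
    (Metric.closedBall_mem_nhds μ one_pos) (.of_forall fun m => (hmeas m).aestronglyMeasurable)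
    ((integrable_gaussPdf hS μ).bdd_mul hf.aestronglyMeasurable (.of_forall hB))
    ((dotProductCLM (ι := Fin n)).integrable_comp hφ).aestronglyMeasurable
    (.of_forall fun x m hm => (dotProductCLM.le_opNorm _).trans
      (mul_le_mul_of_nonneg_left (hscore m hm x) (norm_nonneg _)))
    ((hg.const_mul _).const_mul _) (.of_forall fun x m _ => hdiff m x)
  rwa [dotProductCLM.integral_comp_comm hφ] at hD

end GaussPdf

/-- Differentiation under the integral: `∇_μ E[f] = E[f(x) Σ⁻¹(x-μ)]`. -/
theorem grad_expected_fitness (n : ℕ) (f : (Fin n → ℝ) → ℝ)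
    (hf : Measurable f) (B : ℝ) (hB : ∀ x, |f x| ≤ B)
    (μ : Fin n → ℝ) (S : Matrix (Fin n) (Fin n) ℝ) (hS : S.PosDef) :
    ∀ v : Fin n → ℝ,
      fderiv ℝ (fun m : Fin n → ℝ => ∫ x : Fin n → ℝ, f x * gaussPdf m S x) μ v
        = (∫ x : Fin n → ℝ, (f x * gaussPdf μ S x) • (S⁻¹ *ᵥ (x - μ))) ⬝ᵥ v := by
  intro v
  rw [(hasFDerivAt_integral_mul_gaussPdf hf hB hS μ).fderiv]
  rfl
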